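/- arXiv:0902.1744 — 10 statements merged into one kernel-verified Lean document; each statement's English description precedes it below -/
import Mathlib

section
/- For all integers λ1, λ2, β1, β2 with λ1 ≥ 0, λ2 ≥ 0, λ2 − β2 ≥ 0, λ1 − β1 ≥ 0, β1 − β2 ≥ 0 and −β1 + 2β2 ≥ 0, one has N(λ1, λ2, β1, β2) = (1/2)β1 + (1/2)β2 + β1β2 − (1/2)β2² + 7/8 − (1/4)β1² + (1/8)(−1)^{β1}. -/
/-- The number of quadruples `(a22, a11, a12, a13)` of nonnegative integers satisfying
Littelmann's inequalities for `so₅(ℂ)` together with the weight equations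
`a22 + a12 = β1` and `a11 + a13 = β2`.  By Littelmann's results this is the dimension of
the weight space of weight `λ1·ω1 + λ2·ω2 − β1·α1 − β2·α2` in the irreducible
`so₅(ℂ)`-module of highest weight `λ1·ω1 + λ2·ω2`. -/
noncomputable def weightMult (l1 l2 b1 b2 : ℤ) : ℕ :=
  Set.ncard {a : ℤ × ℤ × ℤ × ℤ |
    0 ≤ a.1 ∧ 0 ≤ a.2.1 ∧ 0 ≤ a.2.2.1 ∧ 0 ≤ a.2.2.2 ∧
    2 * a.2.1 ≥ a.2.2.1 ∧
    a.2.2.1 ≥ 2 * a.2.2.2 ∧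
    a.2.2.2 ≤ l2 ∧
    a.2.2.1 ≤ l1 + 2 * a.2.2.2 ∧
    a.2.1 ≤ l2 + a.2.2.1 - 2 * a.2.2.2 ∧
    a.1 ≤ l1 + 2 * a.2.1 - 2 * a.2.2.1 + 2 * a.2.2.2 ∧
    a.1 + a.2.2.1 = b1 ∧
    a.2.1 + a.2.2.2 = b2}


def S2 (b1 b2 : ℤ) : Set (ℤ × ℤ) :=
  {p | 0 ≤ p.2 ∧ 2 * p.2 ≤ p.1 ∧ p.1 ≤ b1 ∧ p.1 + 2 * p.2 ≤ 2 * b2}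

lemma S2_finite (b1 b2 : ℤ) : (S2 b1 b2).Finite := by
  apply ((Set.finite_Icc (0:ℤ) b1).prod (Set.finite_Icc (0:ℤ) b1)).subset
  rintro ⟨x, y⟩ ⟨h1, h2, h3, h4⟩
  exact ⟨Set.mem_Icc.2 ⟨by omega, by omega⟩, Set.mem_Icc.2 ⟨by omega, by omega⟩⟩

lemma S2_rec (b1 b2 : ℤ) (h0 : 0 ≤ b1) (h1 : b1 ≤ 2 * b2) :
    (S2 b1 b2).ncard = (b1 + 1).toNat + (S2 (b1 - 2) (b2 - 2)).ncard := by
  have hA : S2 b1 b2 = ((fun x : ℤ => (x, (0:ℤ))) '' Set.Icc 0 b1) ∪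
      ((fun p : ℤ × ℤ => (p.1 + 2, p.2 + 1)) '' S2 (b1 - 2) (b2 - 2)) := by
    ext ⟨x, y⟩
    simp only [S2, Set.mem_setOf_eq, Set.mem_union, Set.mem_image, Set.mem_Icc,
      Prod.mk.injEq, Prod.exists]
    constructor
    · rintro ⟨p1, p2, p3, p4⟩
      rcases eq_or_lt_of_le p1 with h | h
      · exact Or.inl ⟨x, ⟨by omega, by omega⟩, by omega, by omega⟩
      · exact Or.inr ⟨x - 2, y - 1, ⟨by omega, by omega, by omega, by omega⟩, by omega, by omega⟩
    · rintro (⟨u, hu, hx, hy⟩ | ⟨u, v, ⟨q1, q2, q3, q4⟩, hx, hy⟩) <;>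
        exact ⟨by omega, by omega, by omega, by omega⟩
  have hdisj : Disjoint ((fun x : ℤ => (x, (0:ℤ))) '' Set.Icc 0 b1)
      ((fun p : ℤ × ℤ => (p.1 + 2, p.2 + 1)) '' S2 (b1 - 2) (b2 - 2)) := by
    rw [Set.disjoint_left]
    rintro ⟨x, y⟩ ⟨u, hu, hxy⟩ ⟨p, hp, hxy'⟩
    simp only [Prod.mk.injEq] at hxy hxy'
    have := hp.1
    omega
  rw [hA, Set.ncard_union_eq hdisj ((Set.finite_Icc _ _).image _) ((S2_finite _ _).image _)]
  congr 1
  · rw [Set.ncard_image_of_injective _ (fun a b h => (Prod.ext_iff.1 h).1)]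
    rw [← Finset.coe_Icc, Set.ncard_coe_finset, Int.card_Icc]
    congr 1; omega
  · exact Set.ncard_image_of_injective _ (fun a b h => by
      simp only [Prod.mk.injEq] at h
      exact Prod.ext_iff.2 ⟨by omega, by omega⟩)

lemma S2_trunc (b1 b2 : ℤ) (h : 2 * b2 ≤ b1) : S2 b1 b2 = S2 (2 * b2) b2 := by
  ext ⟨x, y⟩
  simp only [S2, Set.mem_setOf_eq]
  omega

noncomputable def weightPoly (b1 b2 : ℤ) : ℚ :=
  (1/2)*b1 + (1/2)*b2 + b1*b2 - (1/2)*b2^2 + 7/8 - (1/4)*b1^2 + (1/8)*(-1 : ℚ)^b1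

lemma S2_zero : (S2 0 0).ncard = 1 := by
  have h : S2 0 0 = {((0:ℤ), (0:ℤ))} := by
    ext ⟨x, y⟩
    simp only [S2, Set.mem_setOf_eq, Set.mem_singleton_iff, Prod.mk.injEq]
    omega
  rw [h, Set.ncard_singleton]

lemma S2_one_one : (S2 1 1).ncard = 2 := by
  have h : S2 1 1 = {((0:ℤ), (0:ℤ)), (1, 0)} := by
    ext ⟨x, y⟩
    simp only [S2, Set.mem_setOf_eq, Set.mem_insert_iff, Set.mem_singleton_iff, Prod.mk.injEq]
    omega
  rw [h, Set.ncard_pair (by decide)]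

lemma S2_two_one : (S2 2 1).ncard = 3 := by
  have h : S2 2 1 = ↑({((0:ℤ), (0:ℤ)), (1, 0), (2, 0)} : Finset (ℤ × ℤ)) := by
    ext ⟨x, y⟩
    simp only [S2, Set.mem_setOf_eq, Finset.coe_insert, Set.mem_insert_iff,
      Finset.coe_singleton, Set.mem_singleton_iff, Prod.mk.injEq]
    omega
  rw [h, Set.ncard_coe_finset]
  decide

lemma neg_one_zpow_sub_two (m : ℤ) : (-1 : ℚ) ^ (m - 2) = (-1 : ℚ) ^ m := by
  rw [zpow_sub₀ (by norm_num : (-1:ℚ) ≠ 0)]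
  norm_num

lemma neg_one_zpow_two_mul (m : ℤ) : (-1 : ℚ) ^ (2 * m) = 1 := by
  exact Even.neg_one_zpow ⟨m, by ring⟩

lemma neg_one_zpow_two_mul_sub_one (m : ℤ) : (-1 : ℚ) ^ (2 * m - 1) = -1 := by
  rw [zpow_sub₀ (by norm_num : (-1:ℚ) ≠ 0), neg_one_zpow_two_mul]
  norm_num

lemma count : ∀ n : ℕ, ∀ b1 : ℤ, (n : ℤ) ≤ b1 → b1 ≤ 2 * n →
    ((S2 b1 n).ncard : ℚ) = weightPoly b1 n := by
  intro n
  induction n using Nat.strong_induction_on with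
  | _ n ih =>
    intro b1 hle1 hle2
    by_cases h0 : n = 0
    · subst h0
      have hb : b1 = 0 := by omega
      subst hb
      simp only [Nat.cast_zero] at *
      rw [S2_zero]
      unfold weightPoly
      norm_num
    by_cases h1 : n = 1
    · subst h1
      simp only [Nat.cast_one] at *
      have hb : b1 = 1 ∨ b1 = 2 := by omega
      rcases hb with hb | hb <;> subst hb
      · rw [S2_one_one]; unfold weightPoly; norm_num
      · rw [S2_two_one]; unfold weightPoly
        rw [show ((2:ℤ)) = 2 * 1 by norm_num, neg_one_zpow_two_mul]
        norm_num
    · have hn2 : 2 ≤ n := by omega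
      have hb2 : (2 : ℤ) ≤ (n : ℤ) := by exact_mod_cast hn2
      have hcast : ((n - 2 : ℕ) : ℤ) = (n : ℤ) - 2 := by omega
      have hrec := S2_rec b1 n (by omega) hle2
      have htn : (((b1 + 1).toNat : ℕ) : ℚ) = (b1 : ℚ) + 1 := by
        rw [← Int.cast_natCast, Int.toNat_of_nonneg (by omega : (0:ℤ) ≤ b1 + 1)]
        push_cast
        ring
      by_cases hc : b1 ≤ 2 * (n:ℤ) - 2
      · have hIH := ih (n - 2) (by omega) (b1 - 2) (by omega) (by omega)
        rw [hcast] at hIH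
        rw [hrec, Nat.cast_add, htn, hIH]
        unfold weightPoly
        rw [neg_one_zpow_sub_two b1]
        push_cast
        ring
      · have htr : S2 (b1 - 2) ((n:ℤ) - 2) = S2 (2 * ((n:ℤ) - 2)) ((n:ℤ) - 2) :=
          S2_trunc _ _ (by omega)
        have hIH := ih (n - 2) (by omega) (2 * ((n:ℤ) - 2)) (by omega) (by omega)
        rw [hcast] at hIH
        rw [htr] at hrec
        rw [hrec, Nat.cast_add, htn, hIH]
        unfold weightPoly
        rw [neg_one_zpow_two_mul]
        have hb : b1 = 2 * (n:ℤ) - 1 ∨ b1 = 2 * (n:ℤ) := by omega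
        rcases hb with hb | hb <;> subst hb
        · rw [neg_one_zpow_two_mul_sub_one]
          push_cast
          ring
        · rw [neg_one_zpow_two_mul]
          push_cast
          ring

lemma weightMult_eq_S2 (l1 l2 b1 b2 : ℤ)
    (h0 : 0 ≤ l1) (h1 : 0 ≤ l2) (h2 : 0 ≤ l2 - b2) (h3 : 0 ≤ l1 - b1)
    (h4 : 0 ≤ b1 - b2) (h5 : 0 ≤ -b1 + 2*b2) :
    weightMult l1 l2 b1 b2 = (S2 b1 b2).ncard := by
  unfold weightMult
  have hset : {a : ℤ × ℤ × ℤ × ℤ |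
      0 ≤ a.1 ∧ 0 ≤ a.2.1 ∧ 0 ≤ a.2.2.1 ∧ 0 ≤ a.2.2.2 ∧
      2 * a.2.1 ≥ a.2.2.1 ∧ a.2.2.1 ≥ 2 * a.2.2.2 ∧ a.2.2.2 ≤ l2 ∧
      a.2.2.1 ≤ l1 + 2 * a.2.2.2 ∧ a.2.1 ≤ l2 + a.2.2.1 - 2 * a.2.2.2 ∧
      a.1 ≤ l1 + 2 * a.2.1 - 2 * a.2.2.1 + 2 * a.2.2.2 ∧
      a.1 + a.2.2.1 = b1 ∧ a.2.1 + a.2.2.2 = b2} =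
      (fun p : ℤ × ℤ => (b1 - p.1, b2 - p.2, p.1, p.2)) '' S2 b1 b2 := by
    ext ⟨a, b, c, d⟩
    simp only [S2, Set.mem_setOf_eq, Set.mem_image, Prod.mk.injEq, Prod.exists]
    constructor
    · rintro ⟨p1, p2, p3, p4, p5, p6, p7, p8, p9, p10, p11, p12⟩
      exact ⟨c, d, ⟨by omega, by omega, by omega, by omega⟩, by omega, by omega, by omega, by omega⟩
    · rintro ⟨x, y, ⟨q1, q2, q3, q4⟩, e1, e2, e3, e4⟩
      refine ⟨by omega, by omega, by omega, by omega, by omega, by omega,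
        by omega, by omega, by omega, by omega, by omega, by omega⟩
  rw [hset]
  apply Set.ncard_image_of_injective
  rintro ⟨x, y⟩ ⟨u, v⟩ h
  simp only [Prod.mk.injEq] at h
  exact Prod.ext_iff.2 ⟨by omega, by omega⟩

theorem weightMult_on_cone_f1 (l1 l2 b1 b2 : ℤ)
    (h0 : 0 ≤ l1)
    (h1 : 0 ≤ l2)
    (h2 : 0 ≤ l2 - b2)
    (h3 : 0 ≤ l1 - b1)
    (h4 : 0 ≤ b1 - b2)
    (h5 : 0 ≤ -b1 + 2*b2) :
    (weightMult l1 l2 b1 b2 : ℚ) = (1/2)*b1 + (1/2)*b2 + b1*b2 - (1/2)*b2^2 + 7/8 - (1/4)*b1^2 + (1/8)*(-1 : ℚ)^b1 := by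
  rw [weightMult_eq_S2 l1 l2 b1 b2 h0 h1 h2 h3 h4 h5]
  have hb2 : ((b2.toNat : ℕ) : ℤ) = b2 := by omega
  have hc := count b2.toNat b1 (by omega) (by omega)
  rw [hb2] at hc
  rw [hc]
  unfold weightPoly
  rfl
end

section
/- For all integers λ1, λ2, β1, β2 with λ1 ≥ 0, λ2 ≥ 0, β1 − 2β2 ≥ 0, λ2 − β2 ≥ 0, −λ1 + β1 ≥ 0 and λ1 − β1 + β2 ≥ 0, one has N(λ1, λ2, β1, β2) = (1/2)λ1 − (1/2)β1 + (3/2)β2 − (1/4)λ1² + (1/2)β2² + 7/8 − (1/4)β1² + (1/8)(−1)^{β1+λ1} + (1/2)λ1β1. -/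
/-- `cfun n = ∑_{k<n} (⌊k/2⌋ + 1)`. -/
def cfun (n : ℕ) : ℕ := ∑ k ∈ Finset.range n, (k / 2 + 1)

lemma cfun_succ (n : ℕ) : cfun (n + 1) = cfun n + (n / 2 + 1) :=
  Finset.sum_range_succ _ _

lemma cfun_formula (n : ℕ) : 8 * (cfun n : ℤ) = 2 * n ^ 2 + 4 * n + 1 - (-1) ^ n := by
  induction n using Nat.twoStepInduction with
  | zero => simp [cfun]
  | one => norm_num [cfun, Finset.sum_range_succ]
  | more n ih _ =>
    have h1 := cfun_succ n
    have h2 := cfun_succ (n + 1)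
    have hc : (cfun (n + 2) : ℤ) = (cfun n : ℤ) + n + 2 := by push_cast [h2, h1]; omega
    have hp : ((-1 : ℤ)) ^ (n + 2) = (-1) ^ n := by rw [pow_succ, pow_succ]; ring
    rw [hc, hp]
    push_cast
    linear_combination ih

lemma sum_tri (B : ℕ) : ∀ j ≤ B,
    (∑ z ∈ Finset.range (B + 1 + j), (min z (2 * B - z) / 2 + 1)) + cfun (B - j)
      = cfun (B + 1) + cfun B := by
  intro j
  induction j with
  | zero =>
    intro _
    have h : ∑ z ∈ Finset.range (B + 1), (min z (2 * B - z) / 2 + 1)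
        = ∑ z ∈ Finset.range (B + 1), (z / 2 + 1) :=
      Finset.sum_congr rfl fun z hz => by
        have := Finset.mem_range.mp hz; omega
    rw [h]
    simp [cfun]
  | succ j ih =>
    intro hj
    have ih' := ih (by omega)
    rw [show B + 1 + (j + 1) = (B + 1 + j) + 1 from rfl, Finset.sum_range_succ]
    have h2 : cfun (B - j) = cfun (B - (j + 1)) + ((B - (j + 1)) / 2 + 1) := by
      rw [show B - j = (B - (j + 1)) + 1 by omega, cfun_succ]
    omega

theorem weightMult_on_cone_f2 (l1 l2 b1 b2 : ℤ)
    (h0 : 0 ≤ l1)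
    (h1 : 0 ≤ l2)
    (h2 : 0 ≤ b1 - 2*b2)
    (h3 : 0 ≤ l2 - b2)
    (h4 : 0 ≤ -l1 + b1)
    (h5 : 0 ≤ l1 - b1 + b2) :
    (weightMult l1 l2 b1 b2 : ℚ) = (1/2)*l1 - (1/2)*b1 + (3/2)*b2 - (1/4)*l1^2 + (1/2)*b2^2 + 7/8 - (1/4)*b1^2 + (1/8)*(-1 : ℚ)^(b1 + l1) + (1/2)*l1*b1 := by
  have hb2 : 0 ≤ b2 := by omega
  set B : ℕ := b2.toNat with hB
  set D : ℕ := (b1 - l1).toNat with hD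
  set K : ℕ := B + (B - D) with hK
  have hBz : (B : ℤ) = b2 := Int.toNat_of_nonneg hb2
  have hDz : (D : ℤ) = b1 - l1 := Int.toNat_of_nonneg (by omega)
  set T : Finset (ℤ × ℤ × ℤ × ℤ) :=
    (Finset.range (K + 1)).biUnion (fun z =>
      (Finset.range (min z (2 * B - z) / 2 + 1)).image
        (fun w : ℕ => ((b1 - (z : ℤ), b2 - (w : ℤ), (z : ℤ), (w : ℤ)) : ℤ × ℤ × ℤ × ℤ))) with hT
  have hset : {a : ℤ × ℤ × ℤ × ℤ |
      0 ≤ a.1 ∧ 0 ≤ a.2.1 ∧ 0 ≤ a.2.2.1 ∧ 0 ≤ a.2.2.2 ∧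
      2 * a.2.1 ≥ a.2.2.1 ∧
      a.2.2.1 ≥ 2 * a.2.2.2 ∧
      a.2.2.2 ≤ l2 ∧
      a.2.2.1 ≤ l1 + 2 * a.2.2.2 ∧
      a.2.1 ≤ l2 + a.2.2.1 - 2 * a.2.2.2 ∧
      a.1 ≤ l1 + 2 * a.2.1 - 2 * a.2.2.1 + 2 * a.2.2.2 ∧
      a.1 + a.2.2.1 = b1 ∧
      a.2.1 + a.2.2.2 = b2} = ↑T := by
    ext ⟨x, y, z, w⟩
    simp only [hT, Set.mem_setOf_eq, Finset.coe_biUnion, Finset.mem_coe, Finset.mem_biUnion,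
      Finset.mem_image, Finset.mem_range, Set.mem_iUnion, Prod.mk.injEq]
    constructor
    · rintro ⟨hx, hy, hz, hw, c1, c2, c3, c4, c5, c6, c7, c8⟩
      exact ⟨z.toNat, by omega, w.toNat, by omega, by omega, by omega, by omega, by omega⟩
    · rintro ⟨z', hz', w', hw', e1, e2, e3, e4⟩
      exact ⟨by omega, by omega, by omega, by omega, by omega, by omega, by omega, by omega,
        by omega, by omega, by omega, by omega⟩
  have hcard : weightMult l1 l2 b1 b2 = T.card := by
    rw [weightMult, hset, Set.ncard_coe_finset]
  have hcardsum : T.card = ∑ z ∈ Finset.range (K + 1), (min z (2 * B - z) / 2 + 1) := by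
    rw [hT, Finset.card_biUnion]
    · refine Finset.sum_congr rfl fun z _ => ?_
      rw [Finset.card_image_of_injective _ ?_, Finset.card_range]
      intro w1 w2 hww
      have := congrArg (fun p : ℤ × ℤ × ℤ × ℤ => p.2.2.2) hww
      simpa using this
    · intro z1 _ z2 _ hne
      simp only [Finset.disjoint_left, Finset.mem_image, Finset.mem_range]
      rintro a ⟨w1, _, rfl⟩ ⟨w2, _, hEq⟩
      apply hne
      have := congrArg (fun p : ℤ × ℤ × ℤ × ℤ => p.2.2.1) hEq
      simpa using this.symm
  have hsum := sum_tri B (B - D) (by omega)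
  rw [show B - (B - D) = D by omega] at hsum
  have key : weightMult l1 l2 b1 b2 + cfun D = cfun (B + 1) + cfun B := by
    rw [hcard, hcardsum, show K + 1 = B + 1 + (B - D) by omega]
    exact hsum
  have keyZ : (weightMult l1 l2 b1 b2 : ℤ) + (cfun D : ℤ)
      = (cfun (B + 1) : ℤ) + (cfun B : ℤ) := by exact_mod_cast key
  have f1 := cfun_formula (B + 1)
  have f2 := cfun_formula B
  have f3 := cfun_formula D
  have hp1 : ((-1 : ℤ)) ^ (B + 1) = -(-1) ^ B := by rw [pow_succ]; ring
  rw [hp1] at f1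
  have hint : 8 * ((weightMult l1 l2 b1 b2 : ℤ))
      = 4 * (B : ℤ) ^ 2 + 12 * B + 7 - 2 * (D : ℤ) ^ 2 - 4 * D + (-1) ^ D := by
    push_cast at f1 ⊢
    linear_combination 8 * keyZ + f1 + f2 - f3
  have hq : 8 * (weightMult l1 l2 b1 b2 : ℚ)
      = 4 * (b2 : ℚ) ^ 2 + 12 * b2 + 7 - 2 * ((b1 : ℚ) - l1) ^ 2 - 4 * ((b1 : ℚ) - l1)
        + (-1 : ℚ) ^ D := by
    have hBq : ((B : ℚ)) = (b2 : ℚ) := by exact_mod_cast hBz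
    have hDq : ((D : ℚ)) = (b1 : ℚ) - l1 := by exact_mod_cast hDz
    have := hint
    have h8 : ((8 * (weightMult l1 l2 b1 b2 : ℤ) : ℤ) : ℚ)
        = ((4 * (B : ℤ) ^ 2 + 12 * B + 7 - 2 * (D : ℤ) ^ 2 - 4 * D + (-1) ^ D : ℤ) : ℚ) := by
      exact_mod_cast this
    push_cast at h8
    rw [hBq, hDq] at h8
    exact h8
  have hzpow : (-1 : ℚ) ^ (b1 + l1) = (-1 : ℚ) ^ D := by
    have he : b1 + l1 = (D : ℤ) + 2 * l1 := by omega
    rw [he, zpow_add₀ (by norm_num : (-1 : ℚ) ≠ 0), zpow_natCast]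
    have h2l : (-1 : ℚ) ^ (2 * l1) = 1 := by
      rw [zpow_mul]
      norm_num
    rw [h2l, mul_one]
  rw [hzpow]
  linear_combination (1 / 8 : ℚ) * hq
end

section
/- For all integers λ1, λ2, β1, β2 with λ1 ≥ 0, λ2 ≥ 0, β2 ≥ 0, β1 − 2β2 ≥ 0, λ1 − β1 ≥ 0 and λ2 − β2 ≥ 0, one has N(λ1, λ2, β1, β2) = 1 + (3/2)β2 + (1/2)β2². -/
open Finset

/-- The pairs `(a13, a12)` of a pattern on the cone with `β2 = n`. -/
def conePatterns (n : ℕ) : Finset (Σ _ : ℕ, ℕ) :=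
  (range (n + 1)).sigma fun t => Icc (2 * t) (2 * n - 2 * t)

lemma two_mul_sum_range_sub_four_mul (n : ℕ) :
    2 * ∑ t ∈ range (n + 1), (2 * n + 1 - 4 * t) = (n + 1) * (n + 2) := by
  induction n using Nat.twoStepInduction with
  | zero => simp
  | one => decide
  | more n ih _ =>
    have hshift : ∑ t ∈ range (n + 2), (2 * (n + 2) + 1 - 4 * (t + 1))
        = ∑ t ∈ range (n + 1), (2 * n + 1 - 4 * t) := by
      rw [sum_range_succ]
      have hlast : 2 * (n + 2) + 1 - 4 * (n + 1 + 1) = 0 := by omega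
      rw [hlast, add_zero]
      exact sum_congr rfl fun t _ => by omega
    have hfirst : 2 * (n + 2) + 1 - 4 * 0 = 2 * n + 5 := by omega
    rw [sum_range_succ', hshift, hfirst]
    nlinarith [ih]

lemma two_mul_card_conePatterns (n : ℕ) : 2 * #(conePatterns n) = (n + 1) * (n + 2) := by
  rw [conePatterns, card_sigma, ← two_mul_sum_range_sub_four_mul]
  congr 1
  exact sum_congr rfl fun t _ => by rw [Nat.card_Icc]; omega

lemma weightMult_eq_card_conePatterns {l1 l2 b1 : ℤ} {n : ℕ}
    (hb1 : 0 ≤ b1 - 2 * n) (hl1 : 0 ≤ l1 - b1) (hl2 : 0 ≤ l2 - n) :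
    weightMult l1 l2 b1 n = #(conePatterns n) := by
  let f : (Σ _ : ℕ, ℕ) → ℤ × ℤ × ℤ × ℤ := fun p => (b1 - p.2, n - p.1, p.2, p.1)
  have hinj : Set.InjOn f (conePatterns n) := by
    rintro ⟨t, s⟩ - ⟨t', s'⟩ - h
    simp only [f, Prod.mk.injEq, Nat.cast_inj] at h
    obtain ⟨-, -, rfl, rfl⟩ := h
    rfl
  rw [weightMult, ← Set.ncard_coe_finset, ← hinj.ncard_image]
  congr 1
  ext ⟨a22, a11, a12, a13⟩
  simp only [conePatterns, Set.mem_ofPred_eq, Set.mem_image, coe_sigma, Set.mem_sigma_iff,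
    mem_coe, mem_range, mem_Icc, f, Sigma.exists, Prod.mk.injEq]
  constructor
  · intro h
    lift a13 to ℕ using h.2.2.2.1
    lift a12 to ℕ using h.2.2.1
    exact ⟨a13, a12, by omega⟩
  · rintro ⟨t, s, hts, rfl, rfl, rfl, rfl⟩
    omega

theorem weightMult_on_cone_f5_general (l1 l2 b1 b2 : ℤ)
    (h2 : 0 ≤ b2)
    (h3 : 0 ≤ b1 - 2*b2)
    (h4 : 0 ≤ l1 - b1)
    (h5 : 0 ≤ l2 - b2) :
    (weightMult l1 l2 b1 b2 : ℚ) = 1 + (3/2)*b2 + (1/2)*b2^2 := by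
  lift b2 to ℕ using h2
  have hcount : 2 * weightMult l1 l2 b1 b2 = (b2 + 1) * (b2 + 2) := by
    rw [weightMult_eq_card_conePatterns h3 h4 h5, two_mul_card_conePatterns]
  have hcount' : (2 * weightMult l1 l2 b1 b2 : ℚ) = (b2 + 1) * (b2 + 2) := by
    exact_mod_cast hcount
  push_cast
  linarith

theorem weightMult_on_cone_f5 (l1 l2 b1 b2 : ℤ)
    (h0 : 0 ≤ l1)
    (h1 : 0 ≤ l2)
    (h2 : 0 ≤ b2)
    (h3 : 0 ≤ b1 - 2*b2)
    (h4 : 0 ≤ l1 - b1)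
    (h5 : 0 ≤ l2 - b2) :
    (weightMult l1 l2 b1 b2 : ℚ) = 1 + (3/2)*b2 + (1/2)*b2^2 :=
  weightMult_on_cone_f5_general l1 l2 b1 b2 h2 h3 h4 h5
end

section
/- For all integers λ1, λ2, β1, β2 with λ1 ≥ 0, λ2 ≥ 0, β1 − β2 ≥ 0, 2λ2 + β1 − 2β2 ≥ 0, −β1 + 2β2 ≥ 0, −λ2 + β2 ≥ 0 and λ1 − β1 ≥ 0, one has N(λ1, λ2, β1, β2) = (1/2)λ2 + (1/2)β1 + β1β2 − β2² − (1/4)β1² + λ2β2 − (1/2)λ2² + (1/8)(−1)^{β1} + 7/8. -/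
open Finset

namespace Finset

variable {α M : Type*} [LinearOrder α] [LocallyFiniteOrder α] [AddCommMonoid M]

theorem sum_Ioc_split (f : α → M) {a b c : α} (hab : a ≤ b) (hbc : b ≤ c) :
    ∑ y ∈ Ioc a c, f y = ∑ y ∈ Ioc a b, f y + ∑ y ∈ Ioc b c, f y := by
  rw [← Ioc_union_Ioc_eq_Ioc hab hbc, sum_union (Ioc_disjoint_Ioc_of_le le_rfl)]

theorem sum_Ioc_max_zero_of_sign_change [LinearOrder M] (f : α → M) {a t b : α} (hat : a ≤ t)
    (htb : t ≤ b) (hneg : ∀ y, a < y → y ≤ t → f y ≤ 0) (hpos : ∀ y, t < y → y ≤ b → 0 ≤ f y) :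
    ∑ y ∈ Ioc a b, max (f y) 0 = ∑ y ∈ Ioc t b, f y := by
  rw [sum_Ioc_split _ hat htb, sum_eq_zero fun y hy => ?_, zero_add]
  · exact sum_congr rfl fun y hy => by
      simp only [mem_Ioc] at hy; exact max_eq_left (hpos y hy.1 hy.2)
  · simp only [mem_Ioc] at hy; exact max_eq_right (hneg y hy.1 hy.2)

end Finset

theorem Int.two_mul_sum_Ioc_linear (u v : ℤ) {a b : ℤ} (hab : a ≤ b) :
    2 * ∑ y ∈ Ioc a b, (u + v * y) = 2 * (b - a) * u + v * (b * b + b - a * a - a) := by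
  induction b, hab using Int.leInduction with
  | base => simp
  | succ n hn ih =>
    have hIoc : Ioc a (n + 1) = insert (n + 1) (Ioc a n) := by
      ext x; simp only [mem_Ioc, mem_insert]; omega
    rw [hIoc, sum_insert (by simp only [mem_Ioc]; omega), mul_add, ih]
    ring

theorem neg_one_zpow_eq_one_sub_two_mul_emod {α : Type*} [DivisionRing α] (n : ℤ) :
    (-1 : α) ^ n = 1 - 2 * ((n % 2 : ℤ) : α) := by
  rcases Int.even_or_odd n with hn | hn
  · rw [hn.neg_one_zpow, Int.even_iff.1 hn]; simp
  · rw [hn.neg_one_zpow, Int.odd_iff.1 hn]; norm_num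

/-- The length of row `y` of the lattice polygon counted by `weightMult`; it is negative or zero
when the row is empty. -/
def rowLength (l2 b1 b2 y : ℤ) : ℤ :=
  min b1 (2 * b2 - 2 * y) + 1 - max (2 * y) (b2 - l2 + y)

theorem weightMult_eq_sum_rowLength {l1 l2 b1 b2 : ℤ} (h4 : b1 ≤ 2 * b2) (h6 : b1 ≤ l1) :
    (weightMult l1 l2 b1 b2 : ℤ) = ∑ y ∈ Icc 0 l2, max (rowLength l2 b1 b2 y) 0 := by
  let rows : Finset ((_ : ℤ) × ℤ) :=
    (Icc 0 l2).sigma fun y => Icc (max (2 * y) (b2 - l2 + y)) (min b1 (2 * b2 - 2 * y))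
  let quadruple : ((_ : ℤ) × ℤ) → ℤ × ℤ × ℤ × ℤ := fun p => (b1 - p.2, b2 - p.1, p.2, p.1)
  have hinj : quadruple.Injective := fun p q h => by
    simp only [quadruple, Prod.mk.injEq] at h
    exact Sigma.ext h.2.2.2 (heq_of_eq h.2.2.1)
  have hcard : weightMult l1 l2 b1 b2 = #rows := by
    rw [weightMult, ← Set.ncard_coe_finset, ← Set.ncard_image_of_injective _ hinj]
    congr 1
    ext ⟨a22, a11, a12, a13⟩
    simp only [Set.mem_ofPred_eq, Set.mem_image, mem_coe, rows, mem_sigma, mem_Icc,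
      Sigma.exists, quadruple, Prod.mk.injEq]
    constructor
    · intro h
      exact ⟨a13, a12, ⟨⟨by omega, by omega⟩, by omega, by omega⟩, by omega, by omega, rfl, rfl⟩
    · rintro ⟨y, x, h, rfl, rfl, rfl, rfl⟩
      omega
  rw [hcard, card_sigma]
  push_cast [Int.card_Icc, Int.toNat_eq_max]
  rfl

theorem sum_rowLength_eq_sum_Ioc {l2 b1 b2 : ℤ} (h1 : 0 ≤ l2) (h2 : b2 ≤ b1) (h5 : l2 ≤ b2) :
    ∑ y ∈ Icc 0 l2, max (rowLength l2 b1 b2 y) 0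
      = ∑ y ∈ Ioc (-1) (min l2 (b2 / 2)), rowLength l2 b1 b2 y := by
  have hIcc : Icc 0 l2 = Ioc (-1) l2 := by ext y; simp only [mem_Icc, mem_Ioc]; omega
  have hempty : ∑ y ∈ Ioc (min l2 (b2 / 2)) l2, max (rowLength l2 b1 b2 y) 0 = 0 :=
    sum_eq_zero fun y hy => by simp only [mem_Ioc] at hy; unfold rowLength; omega
  rw [hIcc, sum_Ioc_split _ (b := min l2 (b2 / 2)) (by omega) (min_le_left _ _), hempty, add_zero]
  exact sum_congr rfl fun y hy => by simp only [mem_Ioc] at hy; unfold rowLength; omega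

theorem eight_mul_sum_rowLength {l2 b1 b2 : ℤ} (h1 : 0 ≤ l2) (h2 : b2 ≤ b1)
    (h3 : 2 * b2 ≤ 2 * l2 + b1) (h4 : b1 ≤ 2 * b2) (h5 : l2 ≤ b2) :
    8 * ∑ y ∈ Icc 0 l2, max (rowLength l2 b1 b2 y) 0
      = 4 * l2 + 4 * b1 + 8 * b1 * b2 - 8 * b2 ^ 2 - 2 * b1 ^ 2 + 8 * l2 * b2 - 4 * l2 ^ 2 + 8
        - 2 * (b1 % 2) := by
  rw [sum_rowLength_eq_sum_Ioc h1 h2 h5]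
  obtain ⟨M, hM⟩ : ∃ M, M = min l2 (b2 / 2) := ⟨_, rfl⟩
  obtain ⟨t, ht⟩ : ∃ t, t = (2 * b2 - b1) / 2 := ⟨_, rfl⟩
  obtain ⟨m, hm⟩ : ∃ m, m = min (b2 - l2) M := ⟨_, rfl⟩
  have hdecomp : ∑ y ∈ Ioc (-1) M, rowLength l2 b1 b2 y
      = ∑ y ∈ Ioc (-1) M, (b1 + 1 - (b2 - l2) + (-1) * y)
        - ∑ y ∈ Ioc (-1) M, max (-(2 * b2 - b1) + 2 * y) 0
        - ∑ y ∈ Ioc (-1) M, max (-(b2 - l2) + 1 * y) 0 := by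
    rw [← sum_sub_distrib, ← sum_sub_distrib]
    exact sum_congr rfl fun y _ => by unfold rowLength; omega
  rw [← hM, hdecomp,
    sum_Ioc_max_zero_of_sign_change _ (t := t) (by omega) (by omega) (by omega) (by omega),
    sum_Ioc_max_zero_of_sign_change _ (t := m) (by omega) (by omega) (by omega) (by omega)]
  have hA := Int.two_mul_sum_Ioc_linear (b1 + 1 - (b2 - l2)) (-1) (by omega : -1 ≤ M)
  have hB := Int.two_mul_sum_Ioc_linear (-(2 * b2 - b1)) 2 (by omega : t ≤ M)
  have hC := Int.two_mul_sum_Ioc_linear (-(b2 - l2)) 1 (by omega : m ≤ M)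
  obtain ⟨c, r, rfl, hr⟩ : ∃ c r, b1 = 2 * c + r ∧ (r = 0 ∨ r = 1) :=
    ⟨b1 / 2, b1 % 2, by omega, by omega⟩
  obtain rfl : t = b2 - c - r := by omega
  rw [show (2 * c + r) % 2 = r by omega]
  rcases le_or_gt b2 (2 * l2) with hcase | hcase
  · obtain ⟨Y, s, rfl, hs⟩ : ∃ Y s, b2 = 2 * Y + s ∧ (s = 0 ∨ s = 1) :=
      ⟨b2 / 2, b2 % 2, by omega, by omega⟩
    obtain rfl : M = Y := by omega
    obtain rfl : m = 2 * M + s - l2 := by omega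
    rcases hr with rfl | rfl <;> rcases hs with rfl | rfl <;>
      linear_combination 4 * hA - 4 * hB - 4 * hC
  · obtain rfl : M = l2 := by omega
    obtain rfl : m = M := by omega
    rcases hr with rfl | rfl <;> linear_combination 4 * hA - 4 * hB - 4 * hC

theorem weightMult_on_cone_f6_general (l1 l2 b1 b2 : ℤ)
    (h1 : 0 ≤ l2)
    (h2 : 0 ≤ b1 - b2)
    (h3 : 0 ≤ 2*l2 + b1 - 2*b2)
    (h4 : 0 ≤ -b1 + 2*b2)
    (h5 : 0 ≤ -l2 + b2)
    (h6 : 0 ≤ l1 - b1) :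
    (weightMult l1 l2 b1 b2 : ℚ) = (1/2)*l2 + (1/2)*b1 + b1*b2 - b2^2 - (1/4)*b1^2 + l2*b2 - (1/2)*l2^2 + (1/8)*(-1 : ℚ)^b1 + 7/8 := by
  have hcount := eight_mul_sum_rowLength (b1 := b1) (b2 := b2) h1 (by omega) (by omega)
    (by omega) (by omega)
  rw [← weightMult_eq_sum_rowLength (l1 := l1) (by omega : b1 ≤ 2 * b2) (by omega : b1 ≤ l1)]
    at hcount
  have hcountℚ := congrArg (fun z : ℤ => (z : ℚ)) hcount
  push_cast at hcountℚ
  rw [neg_one_zpow_eq_one_sub_two_mul_emod]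
  linear_combination hcountℚ / 8

theorem weightMult_on_cone_f6 (l1 l2 b1 b2 : ℤ)
    (h0 : 0 ≤ l1)
    (h1 : 0 ≤ l2)
    (h2 : 0 ≤ b1 - b2)
    (h3 : 0 ≤ 2*l2 + b1 - 2*b2)
    (h4 : 0 ≤ -b1 + 2*b2)
    (h5 : 0 ≤ -l2 + b2)
    (h6 : 0 ≤ l1 - b1) :
    (weightMult l1 l2 b1 b2 : ℚ) = (1/2)*l2 + (1/2)*b1 + b1*b2 - b2^2 - (1/4)*b1^2 + l2*b2 - (1/2)*l2^2 + (1/8)*(-1 : ℚ)^b1 + 7/8 :=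
  weightMult_on_cone_f6_general l1 l2 b1 b2 h1 h2 h3 h4 h5 h6
end

section
/- For all integers λ1, λ2, β1, β2 with λ1 ≥ 0, λ2 ≥ 0, −λ2 + β2 ≥ 0, β1 − 2β2 ≥ 0 and λ1 − β1 ≥ 0, one has N(λ1, λ2, β1, β2) = 1 + (1/2)λ2 + β2 + λ2β2 − (1/2)λ2². -/
open Finset

theorem sum_Ico_consecutive' {α M : Type*} [LinearOrder α] [LocallyFiniteOrder α]
    [AddCommMonoid M] (f : α → M) {a b c : α} (hab : a ≤ b) (hbc : b ≤ c) :
    ∑ t ∈ Ico a b, f t + ∑ t ∈ Ico b c, f t = ∑ t ∈ Ico a c, f t := by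
  rw [← sum_union (Ico_disjoint_Ico_consecutive a b c), Ico_union_Ico_eq_Ico hab hbc]

theorem sum_Ico_sub_mul_intCast {a b : ℤ} (hab : a ≤ b) (c d : ℚ) :
    ∑ t ∈ Ico a b, (c - d * t) = (b - a) * (c - d * (a + b - 1) / 2) := by
  induction b, hab using Int.leInduction with
  | base => simp
  | succ b hab ih =>
    rw [← sum_Ico_consecutive' _ hab (by omega), ih, Ico_add_one_right_eq_Icc, Icc_self,
      sum_singleton]
    push_cast
    ring

noncomputable def a12Range (l2 b2 t : ℤ) : Finset ℤ :=
  Icc (max (2 * t) (b2 + t - l2)) (2 * b2 - 2 * t)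

theorem weightMult_eq_sum_card_a12Range {l1 l2 b1 b2 : ℤ} (hb1 : 2 * b2 ≤ b1) (hl1 : b1 ≤ l1) :
    weightMult l1 l2 b1 b2 = ∑ t ∈ Icc 0 l2, #(a12Range l2 b2 t) := by
  let pattern (p : (_ : ℤ) × ℤ) : ℤ × ℤ × ℤ × ℤ := (b1 - p.2, b2 - p.1, p.2, p.1)
  have pattern_injective : pattern.Injective := fun p q h => by
    simp only [pattern, Prod.mk.injEq] at h
    exact Sigma.ext h.2.2.2 (heq_of_eq h.2.2.1)
  rw [← card_sigma, ← card_image_of_injective _ pattern_injective, weightMult,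
    ← Set.ncard_coe_finset]
  congr 1
  ext ⟨a22, a11, a12, a13⟩
  simp only [Set.mem_ofPred_eq, coe_image, Set.mem_image, mem_coe, mem_sigma, mem_Icc, a12Range,
    pattern, Prod.mk.injEq, Sigma.exists, max_le_iff]
  constructor
  · rintro ⟨_, _, _, _, _, _, _, _, _, _, _, _⟩
    exact ⟨a13, a12, by omega⟩
  · rintro ⟨t, s, _, rfl, rfl, rfl, rfl⟩
    omega

section a12Range
variable {l2 b2 t : ℤ}

theorem card_a12Range_of_le_sub (htl : t ≤ l2) (ht : t ≤ b2 - l2) :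
    (#(a12Range l2 b2 t) : ℚ) = b2 + l2 + 1 - 3 * t := by
  have h : (#(a12Range l2 b2 t) : ℤ) = b2 + l2 + 1 - 3 * t := by
    rw [a12Range, Int.card_Icc]
    omega
  exact_mod_cast h

theorem card_a12Range_of_sub_le (ht : b2 - l2 ≤ t) (htb : 2 * t ≤ b2) :
    (#(a12Range l2 b2 t) : ℚ) = 2 * b2 + 1 - 4 * t := by
  have h : (#(a12Range l2 b2 t) : ℤ) = 2 * b2 + 1 - 4 * t := by
    rw [a12Range, Int.card_Icc]
    omega
  exact_mod_cast h

theorem card_a12Range_eq_zero (htl : t ≤ l2) (htb : b2 < 2 * t) : #(a12Range l2 b2 t) = 0 := by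
  rw [a12Range, Int.card_Icc]
  omega

end a12Range

theorem sum_card_a12Range {l2 b2 : ℤ} (hl2 : 0 ≤ l2) (hlb : l2 ≤ b2) :
    ∑ t ∈ Icc 0 l2, (#(a12Range l2 b2 t) : ℚ) =
      1 + (1/2)*l2 + b2 + l2*b2 - (1/2)*l2^2 := by
  rw [← Ico_add_one_right_eq_Icc]
  rcases le_or_gt (2 * l2) b2 with hsmall | hlarge
  · rw [sum_congr rfl fun t ht => card_a12Range_of_le_sub (by grind) (by grind),
      sum_Ico_sub_mul_intCast (by omega)]
    push_cast
    ring
  · have low : ∑ t ∈ Ico 0 (b2 - l2), (#(a12Range l2 b2 t) : ℚ) =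
        ∑ t ∈ Ico 0 (b2 - l2), ((b2 + l2 + 1) - 3 * (t : ℚ)) :=
      sum_congr rfl fun t ht => card_a12Range_of_le_sub (by grind) (by grind)
    have middle : ∑ t ∈ Ico (b2 - l2) (b2 / 2 + 1), (#(a12Range l2 b2 t) : ℚ) =
        ∑ t ∈ Ico (b2 - l2) (b2 / 2 + 1), ((2 * b2 + 1) - 4 * (t : ℚ)) :=
      sum_congr rfl fun t ht => card_a12Range_of_sub_le (by grind) (by grind)
    have high : ∑ t ∈ Ico (b2 / 2 + 1) (l2 + 1), (#(a12Range l2 b2 t) : ℚ) = 0 :=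
      sum_eq_zero fun t ht => by rw [card_a12Range_eq_zero (by grind) (by grind), Nat.cast_zero]
    rw [← sum_Ico_consecutive' _ (by omega : 0 ≤ b2 / 2 + 1) (by omega : b2 / 2 + 1 ≤ l2 + 1),
      ← sum_Ico_consecutive' _ (by omega : 0 ≤ b2 - l2) (by omega : b2 - l2 ≤ b2 / 2 + 1),
      low, middle, high, sum_Ico_sub_mul_intCast (by omega), sum_Ico_sub_mul_intCast (by omega)]
    generalize hq : b2 / 2 = q
    obtain rfl | rfl : b2 = 2 * q ∨ b2 = 2 * q + 1 := by omega
    all_goals push_cast; ring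

theorem weightMult_on_cone_f12_general (l1 l2 b1 b2 : ℤ)
    (h1 : 0 ≤ l2)
    (h2 : 0 ≤ -l2 + b2)
    (h3 : 0 ≤ b1 - 2*b2)
    (h4 : 0 ≤ l1 - b1) :
    (weightMult l1 l2 b1 b2 : ℚ) = 1 + (1/2)*l2 + b2 + l2*b2 - (1/2)*l2^2 := by
  rw [weightMult_eq_sum_card_a12Range (by omega) (by omega), Nat.cast_sum]
  exact sum_card_a12Range h1 (by omega)

theorem weightMult_on_cone_f12 (l1 l2 b1 b2 : ℤ)
    (h0 : 0 ≤ l1)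
    (h1 : 0 ≤ l2)
    (h2 : 0 ≤ -l2 + b2)
    (h3 : 0 ≤ b1 - 2*b2)
    (h4 : 0 ≤ l1 - b1) :
    (weightMult l1 l2 b1 b2 : ℚ) = 1 + (1/2)*l2 + b2 + l2*b2 - (1/2)*l2^2 :=
  weightMult_on_cone_f12_general l1 l2 b1 b2 h1 h2 h3 h4
end

section
/- For all integers λ1, λ2, β1, β2 with λ1 ≥ 0, λ2 ≥ 0, −β1 + 2β2 ≥ 0, −λ1 + β1 − β2 ≥ 0 and λ2 − β2 ≥ 0, one has N(λ1, λ2, β1, β2) = λ1 − (1/2)β1 + β2 + (1/4)λ1² + 3/4 + λ1β2 + (1/8)(−1)^{β1} + (1/8)(−1)^{β1+λ1} − (1/2)λ1β1. -/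
lemma sumG (Z : ℕ) : ∀ n : ℤ, -1 ≤ n → n ≤ 2*Z - 1 →
    ∑ z ∈ Finset.range Z, (n - 2*z).toNat = ((n+1)^2 / 4).toNat := by
  induction Z with
  | zero =>
    intro n h1 h2
    have : n = -1 := le_antisymm (by simpa using h2) h1
    subst this; simp
  | succ Z ih =>
    intro n h1 h2
    rcases le_or_gt n 0 with hn | hn
    · have hz : ∑ z ∈ Finset.range (Z+1), (n - 2*z).toNat = 0 := by
        apply Finset.sum_eq_zero
        intro z _
        omega
      rw [hz]
      have : (n+1)^2 / 4 = 0 := by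
        interval_cases n <;> decide
      rw [this]; rfl
    · rw [Finset.sum_range_succ' (fun z => (n - 2*(z:ℤ)).toNat) Z]
      have : ∑ k ∈ Finset.range Z, (n - 2*((k+1:ℕ):ℤ)).toNat
           = ∑ z ∈ Finset.range Z, ((n-2) - 2*(z:ℤ)).toNat := by
        apply Finset.sum_congr rfl; intro z _; congr 1; push_cast; ring
      rw [this, ih (n-2) (by omega) (by push_cast at h2 ⊢; omega)]
      have hdiv : (n+1)^2 / 4 = (n-2+1)^2/4 + n := by
        have h4 : ((n+1)^2 : ℤ) = (n-1)^2 + n * 4 := by ring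
        rw [show (n-2+1 : ℤ) = n - 1 by ring, h4, Int.add_mul_ediv_right _ _ (by norm_num)]
      have hnn : 0 ≤ ((n-2+1)^2 : ℤ) / 4 := Int.ediv_nonneg (sq_nonneg _) (by norm_num)
      rw [hdiv]
      omega

lemma wm_card (l1 l2 b1 b2 : ℤ) (h0 : 0 ≤ l1) (h1 : 0 ≤ l2)
    (h2 : 0 ≤ -b1 + 2*b2) (h3 : 0 ≤ -l1 + b1 - b2) (h4 : 0 ≤ l2 - b2) :
    weightMult l1 l2 b1 b2 =
      ((Finset.Icc 0 b2).sigma (fun y => Finset.Icc (2*y)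
        (min (l1 + 2*y) (min (l1 + 2*b2 - b1) (2*b2 - 2*y))))).card := by
  rw [weightMult]
  set T := ((Finset.Icc 0 b2).sigma (fun y => Finset.Icc (2*y)
        (min (l1 + 2*y) (min (l1 + 2*b2 - b1) (2*b2 - 2*y))))) with hT
  have hinj : Function.Injective
      (fun p : (_ : ℤ) × ℤ => ((b1 - p.2, b2 - p.1, p.2, p.1) : ℤ × ℤ × ℤ × ℤ)) := by
    rintro ⟨y, x⟩ ⟨y', x'⟩ h
    simp only [Prod.mk.injEq] at h
    obtain ⟨-, -, rfl, rfl⟩ := h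
    rfl
  have hS : {a : ℤ × ℤ × ℤ × ℤ |
      0 ≤ a.1 ∧ 0 ≤ a.2.1 ∧ 0 ≤ a.2.2.1 ∧ 0 ≤ a.2.2.2 ∧
      2 * a.2.1 ≥ a.2.2.1 ∧ a.2.2.1 ≥ 2 * a.2.2.2 ∧ a.2.2.2 ≤ l2 ∧
      a.2.2.1 ≤ l1 + 2 * a.2.2.2 ∧ a.2.1 ≤ l2 + a.2.2.1 - 2 * a.2.2.2 ∧
      a.1 ≤ l1 + 2 * a.2.1 - 2 * a.2.2.1 + 2 * a.2.2.2 ∧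
      a.1 + a.2.2.1 = b1 ∧ a.2.1 + a.2.2.2 = b2} =
      (fun p : (_ : ℤ) × ℤ => ((b1 - p.2, b2 - p.1, p.2, p.1) : ℤ × ℤ × ℤ × ℤ)) '' ↑T := by
    ext ⟨a22, a11, a12, a13⟩
    simp only [Set.mem_setOf_eq, Set.mem_image, Finset.coe_sigma, Set.mem_sigma_iff,
      Finset.mem_coe, Finset.mem_Icc, hT, Finset.coe_Icc, Set.mem_Icc, Prod.mk.injEq]
    constructor
    · rintro ⟨ha22, ha11, ha12, ha13, hA, hB, hC, hD, hE, hF, hG, hH⟩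
      refine ⟨⟨a13, a12⟩, ?_, ?_⟩
      · dsimp only
        refine ⟨⟨by omega, by omega⟩, by omega, ?_⟩
        simp only [le_min_iff]
        exact ⟨by omega, by omega, by omega⟩
      · dsimp only
        refine ⟨by omega, by omega, rfl, rfl⟩
    · rintro ⟨⟨y, x⟩, ⟨⟨hy0, hyb⟩, hx1, hx2⟩, he1, he2, rfl, rfl⟩
      dsimp only at *
      simp only [le_min_iff] at hx2
      omega
  rw [hS, Set.ncard_image_of_injective _ hinj, Set.ncard_coe_finset]

lemma wm_closed (l1 l2 b1 b2 : ℤ) (h0 : 0 ≤ l1) (h1 : 0 ≤ l2)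
    (h2 : 0 ≤ -b1 + 2*b2) (h3 : 0 ≤ -l1 + b1 - b2) (h4 : 0 ≤ l2 - b2) :
    (weightMult l1 l2 b1 b2 : ℤ) =
      ((2*b2-b1)/2 + 1) * (l1+1) + (l1 + (2*b2-b1) % 2)^2 / 4 := by
  rw [wm_card l1 l2 b1 b2 h0 h1 h2 h3 h4, Finset.card_sigma]
  set m := 2*b2 - b1 with hm
  set h := m / 2 with hh
  set r := m % 2 with hr
  have hm0 : 0 ≤ m := by omega
  have hhb : h ≤ b2 := by omega
  have hstep1 : ∀ y ∈ Finset.Icc (0:ℤ) b2,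
      (Finset.Icc (2*y) (min (l1 + 2*y) (min (l1 + 2*b2 - b1) (2*b2 - 2*y)))).card
      = (min (l1+1) (l1 + m + 1 - 2*y)).toNat := by
    intro y hy
    rw [Finset.mem_Icc] at hy
    rw [Int.card_Icc]
    omega
  rw [Finset.sum_congr rfl hstep1]
  have hsplit : Finset.Icc (0:ℤ) b2 = Finset.Icc 0 h ∪ Finset.Ioc h b2 := by
    ext y; simp only [Finset.mem_union, Finset.mem_Icc, Finset.mem_Ioc]; omega
  have hdisj : Disjoint (Finset.Icc (0:ℤ) h) (Finset.Ioc h b2) := by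
    rw [Finset.disjoint_left]
    intro y hy hy'
    simp only [Finset.mem_Icc, Finset.mem_Ioc] at hy hy'
    omega
  rw [hsplit, Finset.sum_union hdisj]
  have hfirst : ∑ y ∈ Finset.Icc (0:ℤ) h, (min (l1+1) (l1 + m + 1 - 2*y)).toNat
      = (h+1).toNat * (l1+1).toNat := by
    rw [Finset.sum_congr rfl (fun y hy => ?_), Finset.sum_const, Int.card_Icc, smul_eq_mul]
    · congr 1; omega
    · rw [Finset.mem_Icc] at hy
      have : min (l1+1) (l1 + m + 1 - 2*y) = l1 + 1 := by omega
      rw [this]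
  rw [hfirst]
  have hsecond : ∑ y ∈ Finset.Ioc h b2, (min (l1+1) (l1 + m + 1 - 2*y)).toNat
      = ∑ z ∈ Finset.range (b2 - h).toNat, ((l1 + r - 1) - 2*(z:ℤ)).toNat := by
    apply Finset.sum_nbij' (fun y => (y - (h+1)).toNat) (fun z => h + 1 + (z:ℤ))
    · intro y hy
      rw [Finset.mem_Ioc] at hy
      rw [Finset.mem_range]
      omega
    · intro z hz
      rw [Finset.mem_range] at hz
      rw [Finset.mem_Ioc]
      omega
    · intro y hy
      rw [Finset.mem_Ioc] at hy
      omega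
    · intro z hz
      rw [Finset.mem_range] at hz
      omega
    · intro y hy
      rw [Finset.mem_Ioc] at hy
      have hc : ((y - (h+1)).toNat : ℤ) = y - (h+1) := by omega
      rw [hc]
      omega
  rw [hsecond, sumG _ (l1 + r - 1) (by omega) (by omega)]
  have e1 : (l1 + r - 1 + 1) = l1 + r := by ring
  rw [e1]
  have hnn : 0 ≤ (l1 + r)^2 / 4 := Int.ediv_nonneg (sq_nonneg _) (by norm_num)
  push_cast [Int.toNat_of_nonneg (show (0:ℤ) ≤ h + 1 by omega),
    Int.toNat_of_nonneg (show (0:ℤ) ≤ l1 + 1 by omega),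
    Int.toNat_of_nonneg hnn]
  ring

lemma sq2_div4 (d : ℤ) : (2*d)^2/4 = d^2 := by
  rw [show ((2*d)^2:ℤ) = d^2*4 by ring, Int.mul_ediv_cancel _ (by norm_num)]

lemma sq2'_div4 (d : ℤ) : (2*d+1)^2/4 = d^2 + d := by
  rw [show ((2*d+1)^2:ℤ) = 1 + (d^2+d)*4 by ring, Int.add_mul_ediv_right _ _ (by norm_num : (4:ℤ) ≠ 0)]
  norm_num

theorem weightMult_on_cone_f13 (l1 l2 b1 b2 : ℤ)
    (h0 : 0 ≤ l1)
    (h1 : 0 ≤ l2)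
    (h2 : 0 ≤ -b1 + 2*b2)
    (h3 : 0 ≤ -l1 + b1 - b2)
    (h4 : 0 ≤ l2 - b2) :
    (weightMult l1 l2 b1 b2 : ℚ) = l1 - (1/2)*b1 + b2 + (1/4)*l1^2 + 3/4 + l1*b2 + (1/8)*(-1 : ℚ)^b1 + (1/8)*(-1 : ℚ)^(b1 + l1) - (1/2)*l1*b1 := by
  have key := wm_closed l1 l2 b1 b2 h0 h1 h2 h3 h4
  obtain ⟨c, hc⟩ | ⟨c, hc⟩ := Int.even_or_odd b1 <;>
    obtain ⟨d, hd⟩ | ⟨d, hd⟩ := Int.even_or_odd l1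
  · -- b1 even, l1 even
    rw [Even.neg_one_zpow ⟨c, hc⟩, Even.neg_one_zpow (⟨c + d, by omega⟩ : Even (b1 + l1))]
    have e2 : (2*b2-b1)/2 = b2 - c := by omega
    have e3 : (2*b2-b1) % 2 = 0 := by omega
    rw [e2, e3, show l1 + 0 = 2*d by omega, sq2_div4] at key
    have hq := congrArg (Int.cast : ℤ → ℚ) key
    push_cast at hq
    rw [hq, hc, hd]
    push_cast
    ring
  · -- b1 even, l1 odd
    rw [Even.neg_one_zpow ⟨c, hc⟩, Odd.neg_one_zpow (⟨c + d, by omega⟩ : Odd (b1 + l1))]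
    have e2 : (2*b2-b1)/2 = b2 - c := by omega
    have e3 : (2*b2-b1) % 2 = 0 := by omega
    rw [e2, e3, show l1 + 0 = 2*d+1 by omega, sq2'_div4] at key
    have hq := congrArg (Int.cast : ℤ → ℚ) key
    push_cast at hq
    rw [hq, hc, hd]
    push_cast
    ring
  · -- b1 odd, l1 even
    rw [Odd.neg_one_zpow ⟨c, hc⟩, Odd.neg_one_zpow (⟨c + d, by omega⟩ : Odd (b1 + l1))]
    have e2 : (2*b2-b1)/2 = b2 - c - 1 := by omega
    have e3 : (2*b2-b1) % 2 = 1 := by omega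
    rw [e2, e3, show l1 + 1 = 2*d+1 by omega, sq2'_div4] at key
    have hq := congrArg (Int.cast : ℤ → ℚ) key
    push_cast at hq
    rw [hq, hc, hd]
    push_cast
    ring
  · -- b1 odd, l1 odd
    rw [Odd.neg_one_zpow ⟨c, hc⟩, Even.neg_one_zpow (⟨c + d + 1, by omega⟩ : Even (b1 + l1))]
    have e2 : (2*b2-b1)/2 = b2 - c - 1 := by omega
    have e3 : (2*b2-b1) % 2 = 1 := by omega
    rw [e2, e3, show l1 + 1 = 2*(d+1) by omega, sq2_div4] at key
    have hq := congrArg (Int.cast : ℤ → ℚ) key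
    push_cast at hq
    rw [hq, hc, hd]
    push_cast
    ring
end

section
/- For all integers λ1, λ2, β1, β2 with λ1 ≥ 0, λ2 ≥ 0, β1 − β2 ≥ 0, −2λ2 − β1 + 2β2 ≥ 0 and λ1 − β1 ≥ 0, one has N(λ1, λ2, β1, β2) = 1 + (3/2)λ2 + β1 − β2 − λ2β2 + (1/2)λ2² + λ2β1. -/
lemma sum_aux (A : ℚ) : ∀ n : ℕ, ∑ y ∈ Finset.Icc (0:ℤ) (n:ℤ), (A - (y:ℚ))
    = (n+1)*A - n*(n+1)/2
  | 0 => by simp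
  | (n+1) => by
    have h : Finset.Icc (0:ℤ) ((n:ℤ)+1) = insert ((n:ℤ)+1) (Finset.Icc (0:ℤ) (n:ℤ)) := by
      ext x; simp [Finset.mem_Icc, Finset.mem_insert]; omega
    push_cast
    rw [h, Finset.sum_insert (by simp), sum_aux A n]
    push_cast
    ring



theorem weightMult_on_cone_f18 (l1 l2 b1 b2 : ℤ)
    (h0 : 0 ≤ l1)
    (h1 : 0 ≤ l2)
    (h2 : 0 ≤ b1 - b2)
    (h3 : 0 ≤ -2*l2 - b1 + 2*b2)
    (h4 : 0 ≤ l1 - b1) :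
    (weightMult l1 l2 b1 b2 : ℚ) = 1 + (3/2)*l2 + b1 - b2 - l2*b2 + (1/2)*l2^2 + l2*b1 := by
  set F : Finset (ℤ × ℤ × ℤ × ℤ) :=
    (Finset.Icc (0:ℤ) l2).biUnion (fun y =>
      (Finset.Icc (b2 + y - l2) b1).image (fun x => (b1 - x, b2 - y, x, y))) with hF
  have hset : {a : ℤ × ℤ × ℤ × ℤ |
      0 ≤ a.1 ∧ 0 ≤ a.2.1 ∧ 0 ≤ a.2.2.1 ∧ 0 ≤ a.2.2.2 ∧
      2 * a.2.1 ≥ a.2.2.1 ∧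
      a.2.2.1 ≥ 2 * a.2.2.2 ∧
      a.2.2.2 ≤ l2 ∧
      a.2.2.1 ≤ l1 + 2 * a.2.2.2 ∧
      a.2.1 ≤ l2 + a.2.2.1 - 2 * a.2.2.2 ∧
      a.1 ≤ l1 + 2 * a.2.1 - 2 * a.2.2.1 + 2 * a.2.2.2 ∧
      a.1 + a.2.2.1 = b1 ∧
      a.2.1 + a.2.2.2 = b2} = ↑F := by
    ext ⟨a22, a11, a12, a13⟩
    simp only [Set.mem_setOf_eq, hF, Finset.coe_biUnion, Finset.mem_coe, Finset.mem_Icc,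
      Set.mem_iUnion, Finset.coe_image, Set.mem_image, Finset.mem_coe, Finset.mem_Icc,
      Prod.mk.injEq]
    constructor
    · rintro ⟨c1, c2, c3, c4, c5, c6, c7, c8, c9, c10, c11, c12⟩
      exact ⟨a13, by omega, a12, by omega, by omega, by omega, rfl, rfl⟩
    · rintro ⟨y, hy, x, hx, e1, e2, rfl, rfl⟩
      omega
  have hcount : weightMult l1 l2 b1 b2 = F.card := by
    rw [weightMult, hset, Set.ncard_coe_finset]
  have hdisj : ∀ y1 ∈ (Finset.Icc (0:ℤ) l2), ∀ y2 ∈ (Finset.Icc (0:ℤ) l2), y1 ≠ y2 →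
      Disjoint ((Finset.Icc (b2 + y1 - l2) b1).image (fun x => (b1 - x, b2 - y1, x, y1)))
        ((Finset.Icc (b2 + y2 - l2) b1).image (fun x => (b1 - x, b2 - y2, x, y2))) := by
    intro y1 _ y2 _ hne
    simp only [Finset.disjoint_left, Finset.mem_image]
    rintro a ⟨x1, _, rfl⟩ ⟨x2, _, h⟩
    simp only [Prod.mk.injEq] at h
    exact hne h.2.2.2.symm
  have hcard : F.card = ∑ y ∈ Finset.Icc (0:ℤ) l2, (Finset.Icc (b2 + y - l2) b1).card := by
    rw [hF, Finset.card_biUnion hdisj]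
    refine Finset.sum_congr rfl fun y _ => ?_
    exact Finset.card_image_of_injective _ (fun x1 x2 h => by
      simpa using congrArg (fun p => p.2.2.1) h)
  have hterm : ∀ y ∈ Finset.Icc (0:ℤ) l2,
      (((Finset.Icc (b2 + y - l2) b1).card : ℚ)) = (b1:ℚ) - b2 - y + l2 + 1 := by
    intro y hy
    simp only [Finset.mem_Icc] at hy
    rw [Int.card_Icc]
    have : b1 + 1 - (b2 + y - l2) = b1 - b2 - y + l2 + 1 := by ring
    rw [this]
    have h2' : (((b1 - b2 - y + l2 + 1).toNat : ℤ)) = b1 - b2 - y + l2 + 1 :=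
      Int.toNat_of_nonneg (by omega)
    exact_mod_cast congrArg (fun z : ℤ => (z : ℚ)) h2'
  have hl2 : ((l2.toNat : ℤ)) = l2 := Int.toNat_of_nonneg h1
  have : (weightMult l1 l2 b1 b2 : ℚ) = ∑ y ∈ Finset.Icc (0:ℤ) l2,
      (((b1:ℚ) - b2 + l2 + 1) - (y:ℚ)) := by
    rw [hcount, hcard]
    push_cast
    refine Finset.sum_congr rfl fun y hy => ?_
    rw [hterm y hy]; ring
  rw [this]
  rw [← hl2, sum_aux ((b1:ℚ) - b2 + ((l2.toNat:ℤ):ℚ) + 1) l2.toNat]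
  have hc : ((l2.toNat : ℚ)) = (l2 : ℚ) := by exact_mod_cast hl2
  push_cast [hc]
  ring
end

section
/- For all integers λ1, λ2, β1, β2 with λ1 ≥ 0, λ2 ≥ 0, λ1 + λ2 − β1 + β2 ≥ 0, −λ1 − 2λ2 + β1 ≥ 0, −λ1 + β1 − β2 ≥ 0 and β1 − 2β2 ≥ 0, one has N(λ1, λ2, β1, β2) = 1 + (1/2)β2² + (1/2)λ1² + (1/2)λ2² + λ1λ2 + λ2β2 + λ1β2 + (3/2)β2 + (3/2)λ2 + (3/2)λ1 − (3/2)β1 + (1/2)β1² − λ2β1 − β1β2 − λ1β1. -/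
open Finset

def triangle (n : ℕ) : Finset (ℕ × ℕ) :=
  (range (n + 1)).biUnion antidiagonal

lemma mem_triangle {n : ℕ} {p : ℕ × ℕ} : p ∈ triangle n ↔ p.1 + p.2 ≤ n := by
  simp only [triangle, mem_biUnion, mem_range, HasAntidiagonal.mem_antidiagonal]
  constructor
  · rintro ⟨s, hs, rfl⟩
    omega
  · intro h
    exact ⟨p.1 + p.2, by omega, rfl⟩

lemma card_triangle_mul_two (n : ℕ) : #(triangle n) * 2 = (n + 1) * (n + 2) := by
  have hdisj : (range (n + 1) : Set ℕ).PairwiseDisjoint antidiagonal :=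
    fun s _ t _ hst => disjoint_left.2 fun p hs ht =>
      hst ((HasAntidiagonal.mem_antidiagonal.1 hs).symm.trans
        (HasAntidiagonal.mem_antidiagonal.1 ht))
  have hgauss : ∑ s ∈ range (n + 1), (s + 1) = ∑ i ∈ range (n + 2), i :=
    (sum_range_succ' (fun i => i) (n + 1)).symm
  rw [triangle, card_biUnion hdisj]
  simp only [Nat.card_antidiagonal]
  rw [hgauss, sum_range_id_mul_two, Nat.add_succ_sub_one, mul_comm]

def conePattern (l2 b1 b2 : ℤ) (p : ℕ × ℕ) : ℤ × ℤ × ℤ × ℤ :=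
  (b1 - (b2 - l2 + p.1 + p.2), b2 - p.1, b2 - l2 + p.1 + p.2, p.1)

lemma conePattern_injective (l2 b1 b2 : ℤ) : Function.Injective (conePattern l2 b1 b2) := by
  rintro ⟨x, z⟩ ⟨x', z'⟩ h
  simp only [conePattern, Prod.mk.injEq] at h
  obtain ⟨-, -, h12, h13⟩ := h
  ext <;> omega

lemma weightMult_eq_card_triangle (l1 l2 b1 b2 : ℤ)
    (h2 : 0 ≤ l1 + l2 - b1 + b2) (h3 : 0 ≤ -l1 - 2 * l2 + b1) (h4 : 0 ≤ -l1 + b1 - b2)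
    (h5 : 0 ≤ b1 - 2 * b2) :
    weightMult l1 l2 b1 b2 = #(triangle (l1 + l2 - b1 + b2).toNat) := by
  rw [weightMult, ← Set.ncard_coe_finset,
    ← Set.ncard_image_of_injective _ (conePattern_injective l2 b1 b2)]
  congr 1
  ext ⟨a22, a11, a12, a13⟩
  simp only [Set.mem_ofPred_eq, Set.mem_image, mem_coe, mem_triangle, conePattern,
    Prod.mk.injEq]
  constructor
  · intro h
    refine ⟨(a13.toNat, (l2 + a12 - 2 * a13 - a11).toNat), ?_, ?_, ?_, ?_, ?_⟩ <;> omega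
  · rintro ⟨⟨x, z⟩, hxz, e22, e11, e12, e13⟩
    refine ⟨?_, ?_, ?_, ?_, ?_, ?_, ?_, ?_, ?_, ?_, ?_, ?_⟩ <;> omega

theorem weightMult_on_cone_f20_general (l1 l2 b1 b2 : ℤ)
    (h2 : 0 ≤ l1 + l2 - b1 + b2)
    (h3 : 0 ≤ -l1 - 2*l2 + b1)
    (h4 : 0 ≤ -l1 + b1 - b2)
    (h5 : 0 ≤ b1 - 2*b2) :
    (weightMult l1 l2 b1 b2 : ℚ) = 1 + (1/2)*b2^2 + (1/2)*l1^2 + (1/2)*l2^2 + l1*l2 + l2*b2 + l1*b2 + (3/2)*b2 + (3/2)*l2 + (3/2)*l1 - (3/2)*b1 + (1/2)*b1^2 - l2*b1 - b1*b2 - l1*b1 := by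
  set n := (l1 + l2 - b1 + b2).toNat
  have hn : (n : ℚ) = l1 + l2 - b1 + b2 := by exact_mod_cast Int.toNat_of_nonneg h2
  have hcard : (#(triangle n) : ℚ) * 2 = (n + 1) * (n + 2) := by
    exact_mod_cast card_triangle_mul_two n
  rw [weightMult_eq_card_triangle l1 l2 b1 b2 h2 h3 h4 h5]
  rw [hn] at hcard
  linear_combination hcard / 2

theorem weightMult_on_cone_f20 (l1 l2 b1 b2 : ℤ)
    (h0 : 0 ≤ l1)
    (h1 : 0 ≤ l2)
    (h2 : 0 ≤ l1 + l2 - b1 + b2)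
    (h3 : 0 ≤ -l1 - 2*l2 + b1)
    (h4 : 0 ≤ -l1 + b1 - b2)
    (h5 : 0 ≤ b1 - 2*b2) :
    (weightMult l1 l2 b1 b2 : ℚ) = 1 + (1/2)*b2^2 + (1/2)*l1^2 + (1/2)*l2^2 + l1*l2 + l2*b2 + l1*b2 + (3/2)*b2 + (3/2)*l2 + (3/2)*l1 - (3/2)*b1 + (1/2)*b1^2 - l2*b1 - b1*b2 - l1*b1 :=
  weightMult_on_cone_f20_general l1 l2 b1 b2 h2 h3 h4 h5
end

section
/- For all integers λ1, λ2, β1, β2 with λ1 ≥ 0, λ2 ≥ 0, −λ1 − 2λ2 + β1 ≥ 0, −2λ2 − β1 + 2β2 ≥ 0 and λ1 + λ2 − β2 ≥ 0, one has N(λ1, λ2, β1, β2) = 1 + (5/2)λ2 + λ1 − β2 + λ1λ2 − λ2β2 + (3/2)λ2². -/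
lemma icc_insert (a b : ℤ) (h : a ≤ b + 1) :
    Finset.Icc a (b + 1) = insert (b + 1) (Finset.Icc a b) := by
  ext x
  simp only [Finset.mem_Icc, Finset.mem_insert]
  omega

lemma gauss_aux (n : ℕ) : ∑ t ∈ Finset.Icc (0:ℤ) (n:ℤ), (t:ℚ) = n*(n+1)/2 := by
  induction n with
  | zero => simp
  | succ k ih =>
      have hc : ((k+1:ℕ):ℤ) = (k:ℤ) + 1 := by push_cast; ring
      rw [hc, icc_insert 0 (k:ℤ) (by positivity),
        Finset.sum_insert (by simp), ih]
      push_cast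
      ring

theorem weightMult_on_cone_f29 (l1 l2 b1 b2 : ℤ)
    (h0 : 0 ≤ l1)
    (h1 : 0 ≤ l2)
    (h2 : 0 ≤ -l1 - 2*l2 + b1)
    (h3 : 0 ≤ -2*l2 - b1 + 2*b2)
    (h4 : 0 ≤ l1 + l2 - b2) :
    (weightMult l1 l2 b1 b2 : ℚ) = 1 + (5/2)*l2 + l1 - b2 + l1*l2 - l2*b2 + (3/2)*l2^2 := by
  set F : Finset (ℤ × ℤ × ℤ × ℤ) :=
    (Finset.Icc 0 l2).biUnion (fun t =>
      (Finset.Icc (b2 + t - l2) (l1 + 2*t)).image (fun s => (b1 - s, b2 - t, s, t))) with hF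
  have hset : weightMult l1 l2 b1 b2 = F.card := by
    rw [weightMult, ← Set.ncard_coe_finset]
    congr 1
    ext ⟨w, x, y, z⟩
    simp only [hF, Finset.coe_biUnion, Set.mem_iUnion, Finset.mem_coe, Finset.mem_image,
      Finset.mem_Icc, Set.mem_setOf_eq, Prod.mk.injEq]
    constructor
    · rintro ⟨c1, c2, c3, c4, c5, c6, c7, c8, c9, c10, c11, c12⟩
      exact ⟨z, ⟨by omega, by omega⟩, y, ⟨by omega, by omega⟩, by omega, by omega, rfl, rfl⟩
    · rintro ⟨t, ⟨ht0, ht1⟩, s, ⟨hs0, hs1⟩, rfl, rfl, rfl, rfl⟩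
      refine ⟨by omega, by omega, by omega, by omega, by omega, by omega, by omega,
        by omega, by omega, by omega, by omega, by omega⟩
  have hcard : F.card = ∑ t ∈ Finset.Icc (0:ℤ) l2,
      (Finset.Icc (b2 + t - l2) (l1 + 2*t)).card := by
    rw [hF, Finset.card_biUnion]
    · refine Finset.sum_congr rfl (fun t _ => ?_)
      apply Finset.card_image_of_injective
      intro s1 s2 h
      simpa using congrArg (fun p : ℤ × ℤ × ℤ × ℤ => p.2.2.1) h
    · intro t1 _ t2 _ hne
      simp only [Finset.disjoint_left, Finset.mem_image, Finset.mem_Icc]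
      rintro a ⟨s, _, rfl⟩ ⟨s', _, h⟩
      have := congrArg (fun p : ℤ × ℤ × ℤ × ℤ => p.2.2.2) h
      simp only at this
      exact hne this.symm
  have hIcc : ∀ t ∈ Finset.Icc (0:ℤ) l2,
      ((Finset.Icc (b2 + t - l2) (l1 + 2*t)).card : ℚ) = (l1 + l2 - b2 + 1 : ℤ) + t := by
    intro t ht
    simp only [Finset.mem_Icc] at ht
    rw [Int.card_Icc]
    have h7 : (((l1 + 2*t + 1 - (b2 + t - l2)).toNat : ℤ)) = l1 + 2*t + 1 - (b2 + t - l2) :=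
      Int.toNat_of_nonneg (by omega)
    rw [show (((l1 + 2*t + 1 - (b2 + t - l2)).toNat : ℕ) : ℚ)
        = ((l1 + 2*t + 1 - (b2 + t - l2) : ℤ) : ℚ) by exact_mod_cast congrArg (fun z : ℤ => (z:ℚ)) h7]
    push_cast
    ring
  have hl2 : ((l2.toNat : ℤ)) = l2 := Int.toNat_of_nonneg h1
  rw [hset, hcard]
  push_cast [Finset.sum_congr rfl hIcc]
  rw [Finset.sum_add_distrib, Finset.sum_const, ← hl2, gauss_aux]
  rw [Int.card_Icc]
  have : ((l2.toNat : ℤ) + 1 - 0).toNat = l2.toNat + 1 := by omega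
  rw [this]
  have hq : ((l2.toNat : ℚ)) = (l2 : ℚ) := by exact_mod_cast congrArg (fun z : ℤ => (z:ℚ)) hl2
  simp only [nsmul_eq_mul]
  push_cast
  ring
end

section
/- Let i and j be nonnegative integers with i ≤ 2j and j ≤ i (equivalently i/2 ≤ j ≤ i), so that λ = iα1 + jα2 = (2i − 2j)ω1 + (−i + 2j)ω2 is a dominant weight lying in the root lattice. Then N(2i − 2j, −i + 2j, i, j) = i/2 − i² + 3ij − 2j² + (3 + (−1)^i)/4; that is, the multiplicity of the weight 0 in the irreducible so_5(C)-module of highest weight λ equals this expression. -/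
/-!
Put `p = i - j` and `m = 2j - i`. A pattern of weight zero is determined by `(a12, a13)`, and in
the coordinates `z = a13`, `w = 2p + 2a13 - a12` Littelmann's inequalities cut out
`0 ≤ z ≤ m`, `max 0 (4z - 2m) ≤ w ≤ min (2p) (p + z)`. Replacing `m` by `m + 2` and shifting `z`
by one gains one point in each column `z < p` and adds the columns `z = 0` and `z = m + 2`, in all
`2p + 1` points; so the count is `pm + p + ⌊m/2⌋ + 1`, which is the stated polynomial since
`i ≡ m (mod 2)`.
-/

open Finset

-- Truncated subtraction gives both `max 0 (4z - 2m)` and the value `0` on an empty column.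
def fiberCount (p m z : ℕ) : ℕ := min (2 * p) (p + z) + 1 - (4 * z - 2 * m)

lemma fiberCount_add_two (p m z : ℕ) (hz : z ≤ m) :
    fiberCount p (m + 2) (z + 1) = fiberCount p m z + if z < p then 1 else 0 := by
  unfold fiberCount
  split_ifs <;> omega

lemma card_filter_range_lt (n p : ℕ) : #{z ∈ range n | z < p} = min p n := by
  rw [show {z ∈ range n | z < p} = range (min p n) by ext; simp; omega, card_range]

lemma sum_fiberCount (p m : ℕ) :
    ∑ z ∈ range (m + 1), fiberCount p m z = p * m + p + m / 2 + 1 := by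
  induction m using Nat.twoStepInduction with
  | zero => simp [fiberCount, two_mul]
  | one => simp [sum_range_succ, fiberCount]; omega
  | more m ih _ =>
    have hshift : ∑ z ∈ range (m + 1), fiberCount p (m + 2) (z + 1)
        = ∑ z ∈ range (m + 1), fiberCount p m z + min p (m + 1) := by
      rw [sum_congr rfl fun z hz => fiberCount_add_two p m z (by simp at hz; omega),
        sum_add_distrib, sum_boole, card_filter_range_lt]
      simp
    rw [sum_range_succ, sum_range_succ', hshift, ih]
    have hlast : fiberCount p (m + 2) (m + 2) = p - (m + 1) := by unfold fiberCount; omega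
    have hfirst : fiberCount p (m + 2) 0 = p + 1 := by unfold fiberCount; omega
    rw [hlast, hfirst, show (m + 2) / 2 = m / 2 + 1 by omega, Nat.mul_add]
    omega

def zeroWeightRegion (p m : ℕ) : Finset (Σ _ : ℕ, ℕ) :=
  (range (m + 1)).sigma fun z => Icc (4 * z - 2 * m) (min (2 * p) (p + z))

lemma card_zeroWeightRegion (p m : ℕ) :
    #(zeroWeightRegion p m) = ∑ z ∈ range (m + 1), fiberCount p m z := by
  simp only [zeroWeightRegion, card_sigma, Nat.card_Icc, fiberCount]

lemma weightMult_eq_card_zeroWeightRegion (p m : ℕ) :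
    weightMult (2 * p) m (2 * p + m) (p + m) = #(zeroWeightRegion p m) := by
  let f : (Σ _ : ℕ, ℕ) → ℤ × ℤ × ℤ × ℤ := fun x =>
    (m - 2 * x.1 + x.2, p + m - x.1, 2 * p + 2 * x.1 - x.2, x.1)
  have hf : Function.Injective f := by
    rintro ⟨z, w⟩ ⟨z', w'⟩ h
    simp only [f, Prod.mk.injEq] at h
    obtain rfl : z = z' := by omega
    simp only [Sigma.mk.injEq, heq_eq_eq, true_and]
    omega
  rw [weightMult, ← Set.ncard_coe_finset, ← Set.ncard_image_of_injective _ hf]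
  congr 1
  ext ⟨a22, a11, a12, a13⟩
  simp only [zeroWeightRegion, Set.mem_ofPred_eq, Set.mem_image, coe_sigma, Set.mem_sigma_iff,
    coe_range, Set.mem_Iio, coe_Icc, Set.mem_Icc, f, Prod.mk.injEq, Sigma.exists]
  constructor
  · intro h
    exact ⟨a13.toNat, (2 * p + 2 * a13 - a12).toNat, by omega⟩
  · rintro ⟨z, w, h, rfl, rfl, rfl, rfl⟩
    omega

theorem weightMult_eq (p m : ℕ) :
    weightMult (2 * p) m (2 * p + m) (p + m) = p * m + p + m / 2 + 1 := by
  rw [weightMult_eq_card_zeroWeightRegion, card_zeroWeightRegion, sum_fiberCount]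

/-- The multiplicity of the weight `0` in the irreducible `so₅(ℂ)`-module of highest
weight `λ = i·α1 + j·α2 = (2i − 2j)·ω1 + (−i + 2j)·ω2` (which is dominant precisely
when `i/2 ≤ j ≤ i`). -/
theorem zero_weight_multiplicity (i j : ℤ)
    (hi : 0 ≤ i) (hj : 0 ≤ j) (h1 : i ≤ 2 * j) (h2 : j ≤ i) :
    (weightMult (2 * i - 2 * j) (-i + 2 * j) i j : ℚ) =
      i / 2 - i ^ 2 + 3 * i * j - 2 * j ^ 2 + (3 + (-1 : ℚ) ^ i) / 4 := by
  obtain ⟨p, hp⟩ : ∃ p : ℕ, (p : ℤ) = i - j := ⟨(i - j).toNat, by omega⟩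
  obtain ⟨m, hm⟩ : ∃ m : ℕ, (m : ℤ) = 2 * j - i := ⟨(2 * j - i).toNat, by omega⟩
  obtain rfl : i = 2 * p + m := by omega
  obtain rfl : j = p + m := by omega
  rw [show 2 * (2 * p + m : ℤ) - 2 * (p + m) = 2 * p by ring,
    show -(2 * p + m : ℤ) + 2 * (p + m) = m by ring, weightMult_eq]
  have hsign : (-1 : ℚ) ^ (2 * (p : ℤ) + m) = (-1) ^ m := by
    rw [zpow_add₀ (by norm_num), zpow_mul]
    norm_num
  rw [hsign]
  rcases Nat.even_or_odd' m with ⟨k, rfl | rfl⟩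
  · rw [show 2 * k / 2 = k by omega, (even_two_mul k).neg_one_pow]
    push_cast
    ring
  · rw [show (2 * k + 1) / 2 = k by omega, (odd_two_mul_add_one k).neg_one_pow]
    push_cast
    ring
end
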